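/- Let (P̂, Δ(·), P(·), I) be a Mahler sliding family in ℝ². Then t ↦ 1/C(P(t)) is a convex quadratic polynomial on I: there exist real numbers a ≥ 0, b, c such that 1/C(P(t)) = a·t² + b·t + c for every t ∈ I. -/

import Mathlib

open MeasureTheory Set

/-- Coordinates of a point of `ℝ²`. -/
noncomputable def coord2 (i : Fin 2) (q : ℝ × ℝ) : ℝ := if i = 0 then q.1 else q.2

/-- The barycenter coordinates of `A ⊆ ℝ²`. -/
noncomputable def bary2 (A : Set (ℝ × ℝ)) (i : Fin 2) : ℝ :=
  (∫ q in A, coord2 i q) / (volume A).toReal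

/-- The covariance matrix of `A ⊆ ℝ²`. -/
noncomputable def cov2 (A : Set (ℝ × ℝ)) : Matrix (Fin 2) (Fin 2) ℝ :=
  Matrix.of fun i j =>
    (∫ q in A, coord2 i q * coord2 j q) / (volume A).toReal - bary2 A i * bary2 A j

/-- The affine invariant `C(A) = |A|² / det Cov(A)`, the inverse `2n`-th power of the
isotropic constant. -/
noncomputable def isoC (A : Set (ℝ × ℝ)) : ℝ := (volume A).toReal ^ 2 / (cov2 A).det

/-! Moving the apex of `Δ(t)` along the line `y = y₂` is a shear of `Δ(t₀)` fixing the base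
line `y = y₁`, and shears preserve area. So the uniform distribution on `P(t)` is the push-forward
of the uniform distribution on `P(t₀)` under the map that shears `Δ(t₀)` and fixes `P̂`: the area
stays `V := |P(t₀)|`, and the coordinates `(x, y)` on `P(t)` become `(x + s w, y)` on `P(t₀)`, with
`w = 1_{Δ(t₀)} (y - y₁)` and `s = (t - t₀) / (y₂ - y₁)`. Hence
`1 / C(P(t)) = det Cov(x + s w, y) / V²` is a quadratic polynomial in `s` whose leading coefficient
`det Cov(w, y) / V²` is nonnegative by the Cauchy–Schwarz inequality. -/

open ProbabilityTheory

lemma exists_quadratic_comp_div_sub {f : ℝ → ℝ} {a b c : ℝ}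
    (hf : ∀ s, f s = a * s ^ 2 + b * s + c) (t₀ l : ℝ) :
    ∃ b' c' : ℝ, ∀ t, f ((t - t₀) / l) = a / l ^ 2 * t ^ 2 + b' * t + c' :=
  ⟨b / l - 2 * a * t₀ / l ^ 2, a * t₀ ^ 2 / l ^ 2 - b * t₀ / l + c, fun t => by rw [hf]; ring⟩

namespace ProbabilityTheory

variable {Ω : Type*} {mΩ : MeasurableSpace Ω} {μ : Measure Ω} {X W Y : Ω → ℝ}

noncomputable def covDet (X Y : Ω → ℝ) (μ : Measure Ω) : ℝ :=
  cov[X, X; μ] * cov[Y, Y; μ] - cov[X, Y; μ] ^ 2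

lemma covariance_self_nonneg (X : Ω → ℝ) (μ : Measure Ω) : 0 ≤ cov[X, X; μ] :=
  integral_nonneg fun _ => mul_self_nonneg _

lemma covDet_map {Ω' : Type*} {mΩ' : MeasurableSpace Ω'} {ν : Measure Ω'} {Z : Ω' → Ω}
    (hX : AEStronglyMeasurable X (ν.map Z)) (hY : AEStronglyMeasurable Y (ν.map Z))
    (hZ : AEMeasurable Z ν) :
    covDet X Y (ν.map Z) = covDet (X ∘ Z) (Y ∘ Z) ν := by
  simp only [covDet, covariance_map hX hX hZ, covariance_map hY hY hZ, covariance_map hX hY hZ]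

variable [IsFiniteMeasure μ]

lemma covariance_add_smul_left (hX : MemLp X 2 μ) (hW : MemLp W 2 μ) (hY : MemLp Y 2 μ)
    (s : ℝ) : cov[X + s • W, Y; μ] = cov[X, Y; μ] + s * cov[W, Y; μ] := by
  rw [covariance_add_left hX (hW.const_smul s) hY, covariance_smul_left]

lemma covariance_add_smul_self (hX : MemLp X 2 μ) (hW : MemLp W 2 μ) (s : ℝ) :
    cov[X + s • W, X + s • W; μ]
      = cov[X, X; μ] + 2 * s * cov[X, W; μ] + s ^ 2 * cov[W, W; μ] := by
  have hXW := hX.add (hW.const_smul s)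
  rw [covariance_add_smul_left hX hW hXW, covariance_comm X, covariance_comm W,
    covariance_add_smul_left hX hW hX, covariance_add_smul_left hX hW hW, covariance_comm W X]
  ring

lemma sq_covariance_le_mul (hX : MemLp X 2 μ) (hY : MemLp Y 2 μ) :
    cov[X, Y; μ] ^ 2 ≤ cov[X, X; μ] * cov[Y, Y; μ] := by
  have h := discrim_le_zero (a := cov[Y, Y; μ]) (b := 2 * cov[X, Y; μ]) (c := cov[X, X; μ])
    fun r => by
      have := covariance_self_nonneg (X + r • Y) μ
      rw [covariance_add_smul_self hX hY] at this
      linarith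
  rw [discrim] at h
  nlinarith

lemma covDet_nonneg (hX : MemLp X 2 μ) (hY : MemLp Y 2 μ) : 0 ≤ covDet X Y μ :=
  sub_nonneg.2 (sq_covariance_le_mul hX hY)

lemma covDet_add_smul_left (hX : MemLp X 2 μ) (hW : MemLp W 2 μ) (hY : MemLp Y 2 μ) (s : ℝ) :
    covDet (X + s • W) Y μ
      = covDet W Y μ * s ^ 2
        + 2 * (cov[X, W; μ] * cov[Y, Y; μ] - cov[X, Y; μ] * cov[W, Y; μ]) * s
        + covDet X Y μ := by
  simp only [covDet]
  rw [covariance_add_smul_self hX hW, covariance_add_smul_left hX hW hY]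
  ring

end ProbabilityTheory

lemma Continuous.memLp_cond {α : Type*} [TopologicalSpace α] [T2Space α] [MeasurableSpace α]
    [OpensMeasurableSpace α] {μ : Measure α} {K : Set α} (hK : IsCompact K) {f : α → ℝ}
    (hf : Continuous f) (p : ENNReal) : MemLp f p μ[|K] := by
  obtain ⟨C, hC⟩ := hK.exists_bound_of_continuousOn hf.continuousOn
  exact MemLp.of_bound hf.aestronglyMeasurable C (ae_cond_of_forall_mem hK.measurableSet hC)

lemma Convex.addHaar_inter_eq_zero_of_disjoint_interior {E : Type*} [NormedAddCommGroup E]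
    [NormedSpace ℝ E] [MeasurableSpace E] [BorelSpace E] [FiniteDimensional ℝ E]
    (μ : Measure E) [μ.IsAddHaarMeasure] {A B : Set E} (hA : Convex ℝ A) (hB : Convex ℝ B)
    (h : Disjoint (interior A) (interior B)) : μ (A ∩ B) = 0 := by
  refine measure_mono_null (fun q ⟨hqA, hqB⟩ => ?_)
    (measure_union_null (hA.addHaar_frontier μ) (hB.addHaar_frontier μ))
  by_cases hq : q ∈ interior A
  · exact Or.inr ⟨subset_closure hqB, Set.disjoint_left.1 h hq⟩
  · exact Or.inl ⟨subset_closure hqA, hq⟩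

namespace MeasureTheory.Measure

variable {α : Type*} [MeasurableSpace α] {μ : Measure α} {H T : Set α} {φ : α → α}
  [DecidablePred (· ∈ T)]

lemma restrict_union_image_eq_map_piecewise (hφ : MeasurePreserving φ μ μ)
    (hφe : MeasurableEmbedding φ) (hT : MeasurableSet T) (hHT : μ (H ∩ T) = 0)
    (hHφT : μ (H ∩ φ '' T) = 0) :
    μ.restrict (H ∪ φ '' T) = (μ.restrict (H ∪ T)).map (T.piecewise φ id) := by
  have hψ : Measurable (T.piecewise φ id) := hφe.measurable.piecewise hT measurable_id
  have hH : (μ.restrict H).map (T.piecewise φ id) = μ.restrict H := by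
    have hoff : ∀ᵐ q ∂μ.restrict H, q ∉ T := by
      rw [ae_iff]
      simpa [Measure.restrict_apply hT, Set.inter_comm] using hHT
    rw [Measure.map_congr (g := id) (hoff.mono fun q hq => Set.piecewise_eq_of_notMem _ _ _ hq),
      Measure.map_id]
  have hT' : (μ.restrict T).map (T.piecewise φ id) = μ.restrict (φ '' T) := by
    rw [Measure.map_congr (g := φ)
      (ae_restrict_of_forall_mem hT fun q hq => Set.piecewise_eq_of_mem _ _ _ hq)]
    exact (hφ.restrict_image_emb hφe T).map_eq
  rw [Measure.restrict_union₀ hHφT (hφe.measurableSet_image.2 hT).nullMeasurableSet,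
    Measure.restrict_union₀ hHT hT.nullMeasurableSet, Measure.map_add _ _ hψ, hH, hT']

lemma measure_union_image_eq (hφ : MeasurePreserving φ μ μ)
    (hφe : MeasurableEmbedding φ) (hT : MeasurableSet T) (hHT : μ (H ∩ T) = 0)
    (hHφT : μ (H ∩ φ '' T) = 0) :
    μ (H ∪ φ '' T) = μ (H ∪ T) := by
  have h := congrArg (· Set.univ) (restrict_union_image_eq_map_piecewise hφ hφe hT hHT hHφT)
  simpa [Measure.map_apply (hφe.measurable.piecewise hT measurable_id) MeasurableSet.univ]
    using h

end MeasureTheory.Measure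

namespace ProbabilityTheory

variable {α : Type*} [MeasurableSpace α] {μ : Measure α} {H T : Set α} {φ : α → α}
  [DecidablePred (· ∈ T)]

lemma cond_union_image_eq_map_piecewise (hφ : MeasurePreserving φ μ μ)
    (hφe : MeasurableEmbedding φ) (hT : MeasurableSet T) (hHT : μ (H ∩ T) = 0)
    (hHφT : μ (H ∩ φ '' T) = 0) :
    μ[|H ∪ φ '' T] = μ[|H ∪ T].map (T.piecewise φ id) := by
  rw [ProbabilityTheory.cond, ProbabilityTheory.cond,
    Measure.restrict_union_image_eq_map_piecewise hφ hφe hT hHT hHφT,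
    Measure.measure_union_image_eq hφ hφe hT hHT hHφT, Measure.map_smul]

end ProbabilityTheory

lemma continuous_coord2 (i : Fin 2) : Continuous (coord2 i) := by
  unfold coord2
  split_ifs <;> fun_prop

lemma one_div_isoC {A : Set (ℝ × ℝ)} (hA : IsCompact A) :
    1 / isoC A = covDet (coord2 0) (coord2 1) volume[|A] / (volume A).toReal ^ 2 := by
  rcases eq_or_ne (volume A) 0 with h0 | h0
  · simp [isoC, h0]
  have := cond_isProbabilityMeasure_of_finite h0 hA.measure_lt_top.ne
  have hcov : ∀ i j, cov2 A i j = cov[coord2 i, coord2 j; volume[|A]] := by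
    intro i j
    rw [covariance_eq_sub ((continuous_coord2 i).memLp_cond hA 2)
      ((continuous_coord2 j).memLp_cond hA 2)]
    simp only [cov2, bary2, Matrix.of_apply, ProbabilityTheory.cond, integral_smul_measure,
      ENNReal.toReal_inv, Pi.mul_apply, smul_eq_mul]
    ring
  rw [isoC, one_div_div, Matrix.det_fin_two, hcov, hcov, hcov, hcov,
    covariance_comm (coord2 1) (coord2 0), covDet]
  ring

noncomputable def shear (s c : ℝ) : (ℝ × ℝ) →ᵃ[ℝ] (ℝ × ℝ) where
  toFun q := (q.1 + s * (q.2 - c), q.2)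
  linear := (LinearMap.fst ℝ ℝ ℝ + s • LinearMap.snd ℝ ℝ ℝ).prod (LinearMap.snd ℝ ℝ ℝ)
  map_vadd' q v := by ext <;> simp; ring

@[simp] lemma shear_apply (s c : ℝ) (q : ℝ × ℝ) : shear s c q = (q.1 + s * (q.2 - c), q.2) :=
  rfl

lemma measurableEmbedding_shear (s c : ℝ) : MeasurableEmbedding (shear s c) :=
  MeasurableEquiv.measurableEmbedding
    { toFun := shear s c
      invFun := shear (-s) c
      left_inv q := by simp
      right_inv q := by simp
      measurable_toFun := (shear s c).continuous_of_finiteDimensional.measurable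
      measurable_invFun := (shear (-s) c).continuous_of_finiteDimensional.measurable }

lemma measurePreserving_shear (s c : ℝ) : MeasurePreserving (shear s c) := by
  have hskew : MeasurePreserving (fun q : ℝ × ℝ => (q.1, q.2 + s * (q.1 - c)))
      ((volume : Measure ℝ).prod volume) ((volume : Measure ℝ).prod volume) :=
    (MeasurePreserving.id _).skew_product (g := fun a x => x + s * (a - c)) (by fun_prop)
      (Filter.Eventually.of_forall fun _ => map_add_right_eq_self volume _)
  rw [Measure.volume_eq_prod]
  exact (Measure.measurePreserving_swap.comp hskew).comp Measure.measurePreserving_swap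

lemma image_shear_triangle (a b u c d s : ℝ) :
    shear s c '' convexHull ℝ {(a, c), (u, d), (b, c)}
      = convexHull ℝ {(a, c), (u + s * (d - c), d), (b, c)} := by
  simp [AffineMap.image_convexHull, Set.image_insert_eq]

lemma coord2_comp_piecewise_shear (T : Set (ℝ × ℝ)) [DecidablePred (· ∈ T)] (s c : ℝ) :
    coord2 0 ∘ T.piecewise (shear s c) id = coord2 0 + s • T.indicator (fun q => q.2 - c) ∧
      coord2 1 ∘ T.piecewise (shear s c) id = coord2 1 := by
  constructor <;> ext q <;> by_cases hq : q ∈ T <;> simp [coord2, hq]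

lemma one_div_isoC_union_image_shear {H T : Set (ℝ × ℝ)} [DecidablePred (· ∈ T)]
    (hH : IsCompact H) (hT : IsCompact T) (s c : ℝ) (hHT : volume (H ∩ T) = 0)
    (hHsT : volume (H ∩ shear s c '' T) = 0) :
    1 / isoC (H ∪ shear s c '' T)
      = covDet (coord2 0 + s • T.indicator fun q => q.2 - c) (coord2 1) volume[|H ∪ T]
        / (volume (H ∪ T)).toReal ^ 2 := by
  have hφ := measurePreserving_shear s c
  have hφe := measurableEmbedding_shear s c
  have hψ : Measurable (T.piecewise (shear s c) id) :=
    hφe.measurable.piecewise hT.measurableSet measurable_id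
  obtain ⟨hx, hy⟩ := coord2_comp_piecewise_shear T s c
  rw [one_div_isoC (hH.union (hT.image (shear s c).continuous_of_finiteDimensional)),
    cond_union_image_eq_map_piecewise hφ hφe hT.measurableSet hHT hHsT,
    Measure.measure_union_image_eq hφ hφe hT.measurableSet hHT hHsT,
    covDet_map (continuous_coord2 0).aestronglyMeasurable
      (continuous_coord2 1).aestronglyMeasurable hψ.aemeasurable, hx, hy]

theorem isoC_sliding_quadratic_general
    (x1 x3 y1 y2 : ℝ) (hy : y1 < y2)
    (Phat : Set (ℝ × ℝ)) (hPcomp : IsCompact Phat) (hPconv : Convex ℝ Phat)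
    (I : Set ℝ)
    (Δ : ℝ → Set (ℝ × ℝ))
    (hΔ : ∀ t, Δ t = convexHull ℝ ({(x1, y1), (t, y2), (x3, y1)} : Set (ℝ × ℝ)))
    (P : ℝ → Set (ℝ × ℝ))
    (hdecomp : ∀ t ∈ I, P t = Phat ∪ Δ t ∧ interior Phat ∩ interior (Δ t) = ∅) :
    ∃ a b c : ℝ, 0 ≤ a ∧ ∀ t ∈ I, 1 / isoC (P t) = a * t ^ 2 + b * t + c := by
  rcases I.eq_empty_or_nonempty with rfl | ⟨t₀, ht₀⟩
  · exact ⟨0, 0, 0, le_rfl, fun t ht => ht.elim⟩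
  classical
  have hΔ_shear (t : ℝ) : Δ t = shear ((t - t₀) / (y2 - y1)) y1 '' Δ t₀ := by
    rw [hΔ, hΔ, image_shear_triangle, div_mul_cancel₀ _ (sub_ne_zero.2 hy.ne'), add_sub_cancel]
  have hΔcomp (t : ℝ) : IsCompact (Δ t) :=
    hΔ t ▸ (Set.toFinite _).isCompact_convexHull (𝕜 := ℝ)
  have hnull : ∀ t ∈ I, volume (Phat ∩ Δ t) = 0 := fun t ht =>
    hPconv.addHaar_inter_eq_zero_of_disjoint_interior volume (hΔ t ▸ convex_convexHull ℝ _)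
      (Set.disjoint_iff_inter_eq_empty.2 (hdecomp t ht).2)
  have hP₀ : IsCompact (P t₀) := (hdecomp t₀ ht₀).1 ▸ hPcomp.union (hΔcomp t₀)
  have hxLp := (continuous_coord2 0).memLp_cond (μ := volume) hP₀ 2
  have hyLp := (continuous_coord2 1).memLp_cond (μ := volume) hP₀ 2
  have hwLp := ((by fun_prop : Continuous fun q : ℝ × ℝ => q.2 - y1).memLp_cond (μ := volume) hP₀
    2).indicator (hΔcomp t₀).measurableSet
  obtain ⟨b, c, hquad⟩ := exists_quadratic_comp_div_sub
    (fun s => covDet_add_smul_left (s := s) hxLp hwLp hyLp) t₀ (y2 - y1)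
  set V := (volume (P t₀)).toReal
  refine ⟨covDet _ (coord2 1) volume[|P t₀] / (y2 - y1) ^ 2 / V ^ 2, b / V ^ 2, c / V ^ 2,
    by have := covDet_nonneg hwLp hyLp; positivity, fun t ht => ?_⟩
  rw [(hdecomp t ht).1, hΔ_shear, one_div_isoC_union_image_shear hPcomp (hΔcomp t₀) _ _
    (hnull t₀ ht₀) (hΔ_shear t ▸ hnull t ht), ← (hdecomp t₀ ht₀).1, hquad]
  ring

/-- Lemma 6.4: for a Mahler sliding family `P(·)` on the interval `I`,
the map `t ↦ 1/C(P(t))` is a convex quadratic polynomial on `I`. -/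
theorem isoC_sliding_quadratic
    (x1 x3 y1 y2 : ℝ) (hx : x3 < x1) (hy : y1 < y2)
    (Phat : Set (ℝ × ℝ)) (hPcomp : IsCompact Phat) (hPconv : Convex ℝ Phat)
    (hPint : (interior Phat).Nonempty)
    (hseg : segment ℝ ((x3 : ℝ), y1) ((x1 : ℝ), y1) ⊆ Phat)
    (I : Set ℝ) (hI : Convex ℝ I)
    (Δ : ℝ → Set (ℝ × ℝ))
    (hΔ : ∀ t, Δ t = convexHull ℝ ({(x1, y1), (t, y2), (x3, y1)} : Set (ℝ × ℝ)))
    (P : ℝ → Set (ℝ × ℝ))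
    (hP : ∀ t, P t = convexHull ℝ (Phat ∪ ({(t, y2)} : Set (ℝ × ℝ))))
    (hdecomp : ∀ t ∈ I, P t = Phat ∪ Δ t ∧ interior Phat ∩ interior (Δ t) = ∅) :
    ∃ a b c : ℝ, 0 ≤ a ∧ ∀ t ∈ I, 1 / isoC (P t) = a * t ^ 2 + b * t + c :=
  isoC_sliding_quadratic_general x1 x3 y1 y2 hy Phat hPcomp hPconv I Δ hΔ P hdecomp
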